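/- Let p : X̃ → X and q : Ỹ → Y be universal covering maps, f : X → Y continuous, and f̃₀ a fixed lifting of f. Define D^{f̃₀}(Y) as the set of deck transformations h of q admitting a fibre-preserving homotopy H̃ : X̃ × [0,1] → Ỹ with H̃₀ = f̃₀ and H̃₁ = h ∘ f̃₀. Then D^{f̃₀}(Y) is a subgroup of the deck transformation group of q: it contains the identity, and if h, h' ∈ D^{f̃₀}(Y) then h ∘ h'⁻¹ ∈ D^{f̃₀}(Y). -/

import Mathlib

open unitInterval

/-- A deck transformation of `q : E → B` is a self-homeomorphism `h` of `E` with `q ∘ h = q`. -/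
def IsDeck {E B : Type*} [TopologicalSpace E] [TopologicalSpace B]
    (q : E → B) (h : E ≃ₜ E) : Prop :=
  ∀ e, q (h e) = q e

/-- `ft` is a lifting of `f : X → Y` with respect to the covering maps `p, q`. -/
def IsLift {XT X YT Y : Type*} [TopologicalSpace XT] [TopologicalSpace X]
    [TopologicalSpace YT] [TopologicalSpace Y]
    (p : XT → X) (q : YT → Y) (f : X → Y) (ft : XT → YT) : Prop :=
  Continuous ft ∧ ∀ x, q (ft x) = f (p x)

/-- A homotopy `H : XT × I → YT` is fibre-preserving with respect to `p` and `q`, i.e.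
fibre-preserving as a map with respect to `p × id : XT × I → X × I` and `q`. -/
def IsFPHomotopy {XT X YT Y : Type*} [TopologicalSpace XT] [TopologicalSpace X]
    [TopologicalSpace YT] [TopologicalSpace Y]
    (p : XT → X) (q : YT → Y) (H : XT × I → YT) : Prop :=
  ∀ z z' : XT × I, p z.1 = p z'.1 → z.2 = z'.2 → q (H z) = q (H z')

/-- Membership in `D^{f0}(Y)`: a deck transformation `h` of `q` admitting a fibre-preserving
homotopy `HT` with `HT_0 = f0` and `HT_1 = h ∘ f0`. -/
def MemDf {X Y XT YT : Type*} [TopologicalSpace X] [TopologicalSpace Y]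
    [TopologicalSpace XT] [TopologicalSpace YT]
    (p : XT → X) (q : YT → Y) (f0 : XT → YT) (h : YT ≃ₜ YT) : Prop :=
  IsDeck q h ∧ ∃ HT : C(XT × I, YT), IsFPHomotopy p q HT ∧
    (∀ x, HT (x, 0) = f0 x) ∧ (∀ x, HT (x, 1) = h (f0 x))

/-!
If `h` and `h'` lie in `D^{f₀}(Y)` via homotopies `G : f₀ ≃ h ∘ f₀` and `G' : f₀ ≃ h' ∘ f₀`,
then `h ∘ h'⁻¹ ∘ G'` runs from `h ∘ h'⁻¹ ∘ f₀` to `h ∘ f₀`, so `G` followed by its reverse is a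
homotopy `f₀ ≃ h ∘ h'⁻¹ ∘ f₀`. Deck transformations commute with `q`, and concatenation and
reversal act only on the time coordinate, so all of these homotopies stay fibre-preserving.
For `h = id` the constant homotopy at `f₀` works because `f₀` lifts `f`.
-/

section

variable {X Y XT YT : Type*} [TopologicalSpace X] [TopologicalSpace Y]
  [TopologicalSpace XT] [TopologicalSpace YT] {p : XT → X} {q : YT → Y}

theorem IsDeck.symm {h : YT ≃ₜ YT} (hh : IsDeck q h) : IsDeck q h.symm := fun e => by
  rw [← hh, h.apply_symm_apply]

theorem IsDeck.trans {h h' : YT ≃ₜ YT} (hh : IsDeck q h) (hh' : IsDeck q h') :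
    IsDeck q (h.trans h') := fun e => by
  rw [Homeomorph.trans_apply, hh', hh]

theorem IsLift.isFPHomotopy_fst {f : X → Y} {f0 : XT → YT} (hf0 : IsLift p q f f0) :
    IsFPHomotopy p q fun z => f0 z.1 := fun z z' hpz _ => by
  rw [hf0.2, hf0.2, hpz]

theorem IsFPHomotopy.deck_comp {H : XT × I → YT} (hH : IsFPHomotopy p q H) {h : YT ≃ₜ YT}
    (hh : IsDeck q h) : IsFPHomotopy p q (h ∘ H) := fun z z' hpz htz => by
  simpa only [Function.comp_apply, hh (H z), hh (H z')] using hH z z' hpz htz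

section Homotopy

variable {f₀ f₁ f₂ : C(XT, YT)}

theorem IsFPHomotopy.homotopy_symm {F : f₀.Homotopy f₁}
    (hF : IsFPHomotopy p q (F ∘ Prod.swap)) : IsFPHomotopy p q (F.symm ∘ Prod.swap) := by
  rintro ⟨x, t⟩ ⟨x', t⟩ hpx rfl
  exact hF (x, σ t) (x', σ t) hpx rfl

theorem IsFPHomotopy.homotopy_trans {F : f₀.Homotopy f₁} {G : f₁.Homotopy f₂}
    (hF : IsFPHomotopy p q (F ∘ Prod.swap)) (hG : IsFPHomotopy p q (G ∘ Prod.swap)) :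
    IsFPHomotopy p q (F.trans G ∘ Prod.swap) := by
  rintro ⟨x, t⟩ ⟨x', t⟩ hpx rfl
  simp only [Function.comp_apply, Prod.swap_prod_mk, ContinuousMap.Homotopy.trans_apply]
  split_ifs
  · exact hF (x, _) (x', _) hpx rfl
  · exact hG (x, _) (x', _) hpx rfl

end Homotopy

variable {f₀ : C(XT, YT)} {h : YT ≃ₜ YT}

theorem memDf_of_homotopy (hh : IsDeck q h) (F : f₀.Homotopy ((h : C(YT, YT)).comp f₀))
    (hF : IsFPHomotopy p q (F ∘ Prod.swap)) : MemDf p q f₀ h :=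
  ⟨hh, F.toContinuousMap.comp .prodSwap, hF, F.apply_zero, F.apply_one⟩

theorem MemDf.exists_homotopy (hf : MemDf p q f₀ h) :
    ∃ F : f₀.Homotopy ((h : C(YT, YT)).comp f₀), IsFPHomotopy p q (F ∘ Prod.swap) := by
  obtain ⟨-, H, hH, hH₀, hH₁⟩ := hf
  exact ⟨⟨H.comp .prodSwap, hH₀, hH₁⟩, hH⟩

theorem memDf_refl {f : X → Y} (hf₀ : IsLift p q f f₀) : MemDf p q f₀ (Homeomorph.refl YT) :=
  memDf_of_homotopy (fun _ => rfl) (.refl f₀) hf₀.isFPHomotopy_fst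

theorem MemDf.symm_trans {h' : YT ≃ₜ YT} (hf : MemDf p q f₀ h) (hf' : MemDf p q f₀ h') :
    MemDf p q f₀ (h'.symm.trans h) := by
  obtain ⟨G, hG⟩ := hf.exists_homotopy
  obtain ⟨G', hG'⟩ := hf'.exists_homotopy
  let c : C(YT, YT) := h'.symm.trans h
  have hc : IsDeck q (h'.symm.trans h) := hf'.1.symm.trans hf.1
  let G'' : (c.comp f₀).Homotopy ((h : C(YT, YT)).comp f₀) :=
    ((ContinuousMap.Homotopy.refl c).comp G').cast rfl (by ext; simp [c])
  have hG'' : IsFPHomotopy p q (G'' ∘ Prod.swap) := hG'.deck_comp hc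
  exact memDf_of_homotopy hc (G.trans G''.symm) (hG.homotopy_trans hG''.homotopy_symm)

end

theorem stmt_5_general {X Y XT YT : Type*} [TopologicalSpace X] [TopologicalSpace Y]
    [TopologicalSpace XT] [TopologicalSpace YT]
    (p : XT → X) (q : YT → Y)
    (f : X → Y)
    (f0 : XT → YT) (hf0 : IsLift p q f f0) :
    MemDf p q f0 (Homeomorph.refl YT) ∧
      ∀ h h' : YT ≃ₜ YT, MemDf p q f0 h → MemDf p q f0 h' →
        MemDf p q f0 (h'.symm.trans h) :=
  let F₀ : C(XT, YT) := ⟨f0, hf0.1⟩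
  ⟨memDf_refl (f₀ := F₀) hf0, fun _ _ => MemDf.symm_trans (f₀ := F₀)⟩

/-- `D^{f0}(Y)` is a subgroup of the deck transformation group of `q`: it contains the
identity, and together with `h, h'` it contains `h ∘ h'⁻¹`. -/
theorem stmt_5 {X Y XT YT : Type*} [TopologicalSpace X] [TopologicalSpace Y]
    [TopologicalSpace XT] [TopologicalSpace YT]
    [PathConnectedSpace X] [PathConnectedSpace Y]
    [LocallyPathConnectedSpace X] [LocallyPathConnectedSpace Y]
    [SimplyConnectedSpace XT] [SimplyConnectedSpace YT]
    [LocallyPathConnectedSpace XT] [LocallyPathConnectedSpace YT]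
    (p : XT → X) (q : YT → Y) (hp : IsCoveringMap p) (hq : IsCoveringMap q)
    (f : X → Y) (hf : Continuous f)
    (f0 : XT → YT) (hf0 : IsLift p q f f0) :
    MemDf p q f0 (Homeomorph.refl YT) ∧
      ∀ h h' : YT ≃ₜ YT, MemDf p q f0 h → MemDf p q f0 h' →
        MemDf p q f0 (h'.symm.trans h) :=
  stmt_5_general p q f f0 hf0
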